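/- Let p and q be coprime integers with p/q ∈ (0, 1/2), set ω = 2πp/q, s = sin(ω/2) and c = cos(ω/2). Let h₁ : ℝ → ℝ be smooth, 2π-periodic with μ{h₁′} ≡ 0; let θ₁ be the unique smooth 2π-periodic solution of s·δ{θ₁} = δ{c·h₁} − σ{s·h₁′} with μ{θ₁} ≡ 0; let φ₁ be the unique smooth 2π-periodic solution of δ{φ₁} = 2·θ₁ with μ{φ₁} ≡ 0; and set ψ₁ = φ₁ + θ₁. Let h₂ : ℝ → ℝ be smooth and 2π-periodic. Then there exists a smooth 2π-periodic function θ₂ with μ{θ₂} ≡ 0 satisfying the second-order equation s·δ{θ₂} = δ{ c·h₂ + c·h₁′·ψ₁ − s·h₁·θ₁ − c·θ₁²/2 } − σ{ s·h₂′ + s·h₁″·ψ₁ + c·h₁′·θ₁ } if and only if μ{ h₂′ + θ₁·θ₁′ } ≡ 0, equivalently if and only if all Fourier coefficients of h₂ + θ₁²/2 at indices in qℤ∖{0} vanish. -/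

import Mathlib

open Real

/-- The average operator `μ{a}(t) = (1/q)·∑_{j=0}^{q−1} a(t + jω)`. -/
noncomputable def avgOp (q : ℕ) (ω : ℝ) (a : ℝ → ℝ) : ℝ → ℝ :=
  fun t => (1 / (q : ℝ)) * ∑ j ∈ Finset.range q, a (t + j * ω)

/-- The `l`-th Fourier coefficient of a real-valued `2π`-periodic function. -/
noncomputable def fourierCoeffR (a : ℝ → ℝ) (l : ℤ) : ℂ :=
  (1 / (2 * (π : ℂ))) * ∫ t in (0:ℝ)..(2 * π),
    (a t : ℂ) * Complex.exp (-Complex.I * l * t)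

/-! ### Auxiliary lemmas -/

section Aux

open Finset MeasureTheory

lemma contDiff_top_deriv {f : ℝ → ℝ} (h : ContDiff ℝ (⊤ : ℕ∞) f) : ContDiff ℝ (⊤ : ℕ∞) (deriv f) := by
  rw [show ((⊤ : ℕ∞) : WithTop ℕ∞) = ((⊤ : ℕ∞) : WithTop ℕ∞) + 1 from rfl] at h
  exact (contDiff_succ_iff_deriv.mp h).2.2

lemma per_nat (a : ℝ → ℝ) (ha : ∀ t, a (t + 2 * π) = a t) (n : ℕ) (t : ℝ) :
    a (t + n * (2 * π)) = a t := by
  induction n with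
  | zero => simp
  | succ k ih =>
      have : t + (k + 1 : ℕ) * (2 * π) = (t + k * (2 * π)) + 2 * π := by push_cast; ring
      rw [this, ha, ih]

lemma orb_shift (q p : ℕ) (ω : ℝ) (hqω : (q : ℝ) * ω = (p : ℝ) * (2 * π))
    (a : ℝ → ℝ) (ha : ∀ t, a (t + 2 * π) = a t) (t : ℝ) :
    ∑ j ∈ Finset.range q, a (t + ω + j * ω) = ∑ j ∈ Finset.range q, a (t + j * ω) := by
  have h1 : ∀ j : ℕ, a (t + ω + j * ω) = a (t + (j + 1 : ℕ) * ω) := by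
    intro j; congr 1; push_cast; ring
  simp_rw [h1]
  have h2 := Finset.sum_range_succ' (fun j => a (t + j * ω)) q
  have h3 := Finset.sum_range_succ (fun j => a (t + j * ω)) q
  have h4 : a (t + q * ω) = a (t + 0 * ω) := by
    rw [show t + (q:ℝ) * ω = t + p * (2 * π) by rw [hqω], per_nat a ha p t]
    norm_num
  have := h2.symm.trans h3
  push_cast at this ⊢
  linarith [this, h4]

lemma orb_delta (q p : ℕ) (ω : ℝ) (hqω : (q : ℝ) * ω = (p : ℝ) * (2 * π))
    (a : ℝ → ℝ) (ha : ∀ t, a (t + 2 * π) = a t) (t : ℝ) :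
    ∑ j ∈ Finset.range q, (a ((t + j * ω) + ω) - a (t + j * ω)) = 0 := by
  rw [Finset.sum_sub_distrib]
  have h1 : ∀ j : ℕ, a ((t + j * ω) + ω) = a (t + ω + j * ω) := by
    intro j; congr 1; ring
  rw [Finset.sum_congr rfl (fun j _ => h1 j), orb_shift q p ω hqω a ha t, sub_self]

lemma orb_sigma (q p : ℕ) (ω : ℝ) (hqω : (q : ℝ) * ω = (p : ℝ) * (2 * π))
    (a : ℝ → ℝ) (ha : ∀ t, a (t + 2 * π) = a t) (t : ℝ) :
    ∑ j ∈ Finset.range q, (a ((t + j * ω) + ω) + a (t + j * ω))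
      = 2 * ∑ j ∈ Finset.range q, a (t + j * ω) := by
  rw [Finset.sum_add_distrib]
  have h1 : ∀ j : ℕ, a ((t + j * ω) + ω) = a (t + ω + j * ω) := by
    intro j; congr 1; ring
  rw [Finset.sum_congr rfl (fun j _ => h1 j), orb_shift q p ω hqω a ha t]
  ring

lemma step_solve (q p : ℕ) (ω : ℝ) (hqω : (q : ℝ) * ω = (p : ℝ) * (2 * π))
    (b : ℝ → ℝ) (hb : ∀ t, b (t + 2 * π) = b t)
    (hS : ∀ t, ∑ j ∈ Finset.range q, b (t + j * ω) = 0) (t : ℝ) :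
    (∑ j ∈ Finset.range q, (j:ℝ) * b (t + ω + j * ω))
      - ∑ j ∈ Finset.range q, (j:ℝ) * b (t + j * ω) = q * b t := by
  have h1 : ∀ j : ℕ, (j:ℝ) * b (t + ω + j * ω)
      = ((j+1 : ℕ):ℝ) * b (t + (j+1 : ℕ) * ω) - b (t + (j+1 : ℕ) * ω) := by
    intro j
    have : t + ω + (j:ℝ) * ω = t + ((j:ℕ)+1 : ℕ) * ω := by push_cast; ring
    rw [this]
    push_cast
    ring
  rw [Finset.sum_congr rfl (fun j _ => h1 j), Finset.sum_sub_distrib]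
  have h2 : ∑ j ∈ Finset.range q, b (t + ((j+1:ℕ)) * ω) = 0 := by
    have := hS (t + ω)
    have e : ∀ j : ℕ, b (t + ω + j * ω) = b (t + ((j+1:ℕ)) * ω) := by
      intro j; congr 1; push_cast; ring
    rw [Finset.sum_congr rfl (fun j _ => e j)] at this
    exact this
  rw [h2]
  have h3 := Finset.sum_range_succ' (fun j : ℕ => (j:ℝ) * b (t + j * ω)) q
  have h4 := Finset.sum_range_succ (fun j : ℕ => (j:ℝ) * b (t + j * ω)) q
  have h5 : b (t + (q:ℝ) * ω) = b t := by
    rw [hqω, per_nat b hb p t]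
  simp only [Nat.cast_zero, zero_mul] at h3
  rw [h4] at h3
  rw [h5] at h3
  push_cast at h3 ⊢
  linarith [h3]

lemma key_identity (q p : ℕ) (ω : ℝ) (hqω : (q : ℝ) * ω = (p : ℝ) * (2 * π))
    (s c : ℝ) (θ₁ φ₁ ψ₁ g g' θd : ℝ → ℝ)
    (φ₁per : ∀ t, φ₁ (t + 2 * π) = φ₁ t)
    (θdper : ∀ t, θd (t + 2 * π) = θd t)
    (gper : ∀ t, g (t + 2 * π) = g t)
    (g'per : ∀ t, g' (t + 2 * π) = g' t)
    (hR3 : ∀ x, s * (θd (x + ω) - θd x) = c * (g (x + ω) - g x) - s * (g' (x + ω) + g' x))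
    (hA : ∀ x, φ₁ (x + ω) - φ₁ x = 2 * θ₁ x)
    (hC : ∀ x, ψ₁ x = φ₁ x + θ₁ x) (t : ℝ) :
    ∑ j ∈ Finset.range q, (s * g' (t + j * ω) * ψ₁ (t + j * ω)
      + c * g (t + j * ω) * θ₁ (t + j * ω) - s * θ₁ (t + j * ω) * θd (t + j * ω)) = 0 := by
  have hpt : ∀ x, 2 * (s * g' x * ψ₁ x + c * g x * θ₁ x - s * θ₁ x * θd x)
      = (-s) * (φ₁ (x + ω) * θd (x + ω) - φ₁ x * θd x)
        + c * (φ₁ (x + ω) * g (x + ω) - φ₁ x * g x)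
        + (-s) * (φ₁ (x + ω) * g' (x + ω) - φ₁ x * g' x) := by
    intro x
    linear_combination (φ₁ (x + ω)) * hR3 x + (s * θd x - c * g x - s * g' x) * hA x
      + (2 * s * g' x) * hC x
  have hδ : ∀ (u v : ℝ → ℝ), (∀ x, u (x + 2 * π) = u x) → (∀ x, v (x + 2 * π) = v x) →
      ∑ j ∈ Finset.range q, (u ((t + j * ω) + ω) * v ((t + j * ω) + ω)
        - u (t + j * ω) * v (t + j * ω)) = 0 := by
    intro u v hu hv
    rw [Finset.sum_sub_distrib]
    have h1 : ∀ j : ℕ, u ((t + j * ω) + ω) * v ((t + j * ω) + ω)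
        = (fun x => u x * v x) (t + ω + j * ω) := by
      intro j; simp only; rw [show (t + (j:ℝ) * ω) + ω = t + ω + j * ω by ring]
    rw [Finset.sum_congr rfl (fun j _ => h1 j),
      orb_shift q p ω hqω (fun x => u x * v x) (fun x => by simp only [hu, hv]) t]
    exact sub_self _
  have h2 : ∀ j : ℕ, 2 * (s * g' (t + j * ω) * ψ₁ (t + j * ω)
      + c * g (t + j * ω) * θ₁ (t + j * ω) - s * θ₁ (t + j * ω) * θd (t + j * ω))
      = (-s) * (φ₁ ((t + j*ω) + ω) * θd ((t + j*ω) + ω) - φ₁ (t + j*ω) * θd (t + j*ω))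
        + c * (φ₁ ((t + j*ω) + ω) * g ((t + j*ω) + ω) - φ₁ (t + j*ω) * g (t + j*ω))
        + (-s) * (φ₁ ((t + j*ω) + ω) * g' ((t + j*ω) + ω) - φ₁ (t + j*ω) * g' (t + j*ω)) :=
    fun j => hpt (t + j * ω)
  have h3 : (2:ℝ) * ∑ j ∈ Finset.range q, (s * g' (t + j * ω) * ψ₁ (t + j * ω)
      + c * g (t + j * ω) * θ₁ (t + j * ω) - s * θ₁ (t + j * ω) * θd (t + j * ω)) = 0 := by
    rw [Finset.mul_sum, Finset.sum_congr rfl (fun j _ => h2 j)]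
    rw [Finset.sum_add_distrib, Finset.sum_add_distrib, ← Finset.mul_sum, ← Finset.mul_sum,
      ← Finset.mul_sum]
    rw [hδ φ₁ θd φ₁per θdper, hδ φ₁ g φ₁per gper, hδ φ₁ g' φ₁per g'per]
    ring
  linarith [h3]

lemma hasDerivAt_shift {f : ℝ → ℝ} (hf : Differentiable ℝ f) (α t : ℝ) :
    HasDerivAt (fun x => f (x + α)) (deriv f (t + α)) t := by
  simpa [Function.comp_def] using ((hf (t + α)).hasDerivAt.comp t ((hasDerivAt_id t).add_const α))

lemma deriv_per {a : ℝ → ℝ} (hd : Differentiable ℝ a) (ha : ∀ t, a (t + 2 * π) = a t) (t : ℝ) :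
    deriv a (t + 2 * π) = deriv a t := by
  have h1 : HasDerivAt (fun x => a (x + 2 * π)) (deriv a (t + 2 * π)) t :=
    hasDerivAt_shift hd (2 * π) t
  rw [show (fun x => a (x + 2 * π)) = a from funext ha] at h1
  exact h1.unique (hd t).hasDerivAt

lemma derive_R3 (ω s c : ℝ) (h₁ θ₁ : ℝ → ℝ) (h₁sm : ContDiff ℝ (⊤ : ℕ∞) h₁) (θ₁sm : ContDiff ℝ (⊤ : ℕ∞) θ₁)
    (θ₁eq : ∀ t, s * (θ₁ (t + ω) - θ₁ t)
      = (c * h₁ (t + ω) - c * h₁ t) - (s * deriv h₁ (t + ω) + s * deriv h₁ t)) :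
    ∀ t, s * (deriv θ₁ (t + ω) - deriv θ₁ t)
      = c * (deriv h₁ (t + ω) - deriv h₁ t)
        - s * (deriv (deriv h₁) (t + ω) + deriv (deriv h₁) t) := by
  have hθd : Differentiable ℝ θ₁ := θ₁sm.differentiable (by simp)
  have hgsm : ContDiff ℝ (⊤ : ℕ∞) (deriv h₁) := contDiff_top_deriv h₁sm
  have hh₁d : Differentiable ℝ h₁ := h₁sm.differentiable (by simp)
  have hgd : Differentiable ℝ (deriv h₁) := hgsm.differentiable (by simp)
  intro t
  set g := deriv h₁ with hg
  set P : ℝ → ℝ := fun x => s * (θ₁ (x + ω) - θ₁ x)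
    - ((c * h₁ (x + ω) - c * h₁ x) - (s * g (x + ω) + s * g x)) with hP
  have hP0 : ∀ x, P x = 0 := fun x => by rw [hP]; simp only; rw [θ₁eq x]; ring
  have hPd : HasDerivAt P (s * (deriv θ₁ (t + ω) - deriv θ₁ t)
      - ((c * deriv h₁ (t + ω) - c * deriv h₁ t)
        - (s * deriv g (t + ω) + s * deriv g t))) t := by
    apply HasDerivAt.sub
    · exact ((hasDerivAt_shift hθd ω t).sub (hθd t).hasDerivAt).const_mul s
    · apply HasDerivAt.sub
      · exact (((hasDerivAt_shift hh₁d ω t).const_mul c).sub ((hh₁d t).hasDerivAt.const_mul c))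
      · exact (((hasDerivAt_shift hgd ω t).const_mul s).add ((hgd t).hasDerivAt.const_mul s))
  rw [show P = fun _ => (0:ℝ) from funext hP0] at hPd
  have := hPd.unique (hasDerivAt_const t 0)
  linarith [this]

lemma exp_int_two_pi (n : ℤ) : Complex.exp ((n : ℂ) * (2 * π * Complex.I)) = 1 :=
  Complex.exp_int_mul_two_pi_mul_I n

lemma exp_neg_per (l : ℤ) : ∀ u : ℝ,
    Complex.exp (-Complex.I * l * ((u + 2 * π) : ℝ)) = Complex.exp (-Complex.I * l * u) := by
  intro u
  rw [show -Complex.I * (l:ℂ) * ((u + 2*π : ℝ) : ℂ)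
      = -Complex.I * l * u + ((-l : ℤ) : ℂ) * (2 * π * Complex.I) by push_cast; ring]
  rw [Complex.exp_add, exp_int_two_pi, mul_one]

lemma integral_shift (a : ℝ → ℝ) (ha : Continuous a) (hper : ∀ t, a (t + 2 * π) = a t)
    (α : ℝ) (l : ℤ) :
    (∫ t in (0:ℝ)..(2 * π), (a (t + α) : ℂ) * Complex.exp (-Complex.I * l * t))
      = Complex.exp (Complex.I * l * α) *
        ∫ t in (0:ℝ)..(2 * π), (a t : ℂ) * Complex.exp (-Complex.I * l * t) := by
  set g : ℝ → ℂ := fun u => Complex.exp (Complex.I * l * α) * ((a u : ℂ) * Complex.exp (-Complex.I * l * u)) with hg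
  have h1 : ∀ t : ℝ, (a (t + α) : ℂ) * Complex.exp (-Complex.I * l * t) = g (t + α) := by
    intro t
    simp only [hg]
    rw [mul_left_comm, ← Complex.exp_add]
    congr 1
    push_cast
    ring
  rw [intervalIntegral.integral_congr (fun t _ => h1 t)]
  rw [intervalIntegral.integral_comp_add_right g α]
  have hgper : Function.Periodic g (2 * π) := by
    intro u
    simp only [hg, hper u, exp_neg_per l u]
  have h2 := hgper.intervalIntegral_add_eq α 0
  rw [zero_add] at h2
  rw [show (0:ℝ) + α = α by ring, show (2:ℝ) * π + α = α + 2 * π by ring, h2,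
    intervalIntegral.integral_const_mul]

lemma integral_exp_zero (l : ℤ) (hl : l ≠ 0) :
    (∫ t in (0:ℝ)..(2 * π), Complex.exp (-Complex.I * l * t)) = 0 := by
  have h1 : ∀ t : ℝ, Complex.exp (-Complex.I * l * t) = Complex.exp ((-Complex.I * l) * t) := by
    intro t; ring_nf
  have hc : -Complex.I * l ≠ 0 := by
    simp [Complex.I_ne_zero, Complex.ext_iff]
    exact_mod_cast hl
  rw [intervalIntegral.integral_congr (fun t _ => h1 t), integral_exp_mul_complex hc]
  have key : Complex.exp (-Complex.I * (l:ℂ) * ((2*π : ℝ) : ℂ)) = 1 := by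
    rw [show -Complex.I * (l:ℂ) * ((2*π : ℝ) : ℂ)
        = ((-l : ℤ) : ℂ) * (2 * π * Complex.I) by push_cast; ring]
    exact exp_int_two_pi _
  push_cast at key ⊢
  rw [key]
  simp

lemma cont_integrand {a : ℝ → ℝ} (ha : Continuous a) (l : ℤ) (α : ℝ) :
    Continuous (fun t : ℝ => (a (t + α) : ℂ) * Complex.exp (-Complex.I * l * t)) := by
  apply Continuous.mul
  · exact Complex.continuous_ofReal.comp (ha.comp (continuous_id.add continuous_const))
  · exact Complex.continuous_exp.comp (continuous_const.mul Complex.continuous_ofReal)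

lemma coeffR_const (C : ℝ) (l : ℤ) (hl : l ≠ 0) : fourierCoeffR (fun _ => C) l = 0 := by
  unfold fourierCoeffR
  rw [show (fun t : ℝ => ((C:ℝ) : ℂ) * Complex.exp (-Complex.I * l * t))
    = fun t : ℝ => (C : ℂ) * Complex.exp (-Complex.I * l * t) from rfl]
  rw [intervalIntegral.integral_const_mul, integral_exp_zero l hl]
  simp

lemma exp_orbit_one (p q : ℕ) (hq : q ≠ 0) (l : ℤ) (hdvd : (q:ℤ) ∣ l)
    (ω : ℝ) (hω : ω = 2 * π * p / q) (j : ℕ) :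
    Complex.exp (Complex.I * l * ((j * ω : ℝ) : ℂ)) = 1 := by
  obtain ⟨m, rfl⟩ := hdvd
  have hq' : (q : ℂ) ≠ 0 := Nat.cast_ne_zero.mpr hq
  rw [show Complex.I * ((q : ℤ) * m : ℤ) * ((j * ω : ℝ) : ℂ)
      = ((m * j * p : ℤ) : ℂ) * (2 * π * Complex.I) by
    subst hω; push_cast; field_simp]
  exact exp_int_two_pi _

lemma exp_orbit_sum_zero (p q : ℕ) (hco : Nat.Coprime p q) (hq : q ≠ 0) (l : ℤ)
    (hndvd : ¬ (q:ℤ) ∣ l) (ω : ℝ) (hω : ω = 2 * π * p / q) :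
    ∑ j ∈ Finset.range q, Complex.exp (Complex.I * l * ((j * ω : ℝ) : ℂ)) = 0 := by
  have hq' : (q : ℂ) ≠ 0 := Nat.cast_ne_zero.mpr hq
  set ζ : ℂ := Complex.exp (Complex.I * l * (ω : ℂ)) with hζ
  have hterm : ∀ j : ℕ, Complex.exp (Complex.I * l * ((j * ω : ℝ) : ℂ)) = ζ ^ j := by
    intro j
    rw [hζ, ← Complex.exp_nat_mul]
    congr 1
    push_cast
    ring
  simp_rw [hterm]
  have hζq : ζ ^ q = 1 := by
    rw [hζ, ← Complex.exp_nat_mul]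
    rw [show (q : ℂ) * (Complex.I * l * (ω : ℂ)) = ((l * p : ℤ) : ℂ) * (2 * π * Complex.I) by
      subst hω; push_cast; field_simp]
    exact exp_int_two_pi _
  have hζ1 : ζ ≠ 1 := by
    intro h
    rw [hζ, Complex.exp_eq_one_iff] at h
    obtain ⟨n, hn⟩ := h
    have hre : (l * ω : ℝ) = n * (2 * π) := by
      have : ((l * ω : ℝ) : ℂ) = ((n * (2 * π) : ℝ) : ℂ) := by
        apply mul_left_cancel₀ Complex.I_ne_zero
        rw [show Complex.I * ((l * ω : ℝ) : ℂ) = Complex.I * l * (ω : ℂ) by push_cast; ring, hn]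
        push_cast
        ring
      exact_mod_cast this
    have hlp : (l * p : ℝ) = (n * q : ℝ) := by
      rw [hω] at hre
      have hqR : (q : ℝ) ≠ 0 := Nat.cast_ne_zero.mpr hq
      field_simp at hre
      nlinarith [hre, pi_pos]
    have hlpz : l * (p : ℤ) = n * (q : ℤ) := by exact_mod_cast hlp
    apply hndvd
    have hcop : IsCoprime (q : ℤ) (p : ℤ) := by
      rw [Int.isCoprime_iff_gcd_eq_one]
      simpa using hco.symm
    exact hcop.dvd_of_dvd_mul_right ⟨n, by linarith [hlpz]⟩
  rw [geom_sum_eq hζ1, hζq]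
  simp

lemma coeffR_avg (q : ℕ) (ω : ℝ) (a : ℝ → ℝ) (ha : Continuous a)
    (hper : ∀ t, a (t + 2 * π) = a t) (l : ℤ) :
    fourierCoeffR (avgOp q ω a) l
      = (1 / (q:ℂ)) * (∑ j ∈ Finset.range q, Complex.exp (Complex.I * l * ((j * ω : ℝ) : ℂ)))
        * fourierCoeffR a l := by
  unfold fourierCoeffR avgOp
  have h1 : ∀ t : ℝ, (((1 / (q : ℝ)) * ∑ j ∈ Finset.range q, a (t + j * ω) : ℝ) : ℂ)
      * Complex.exp (-Complex.I * l * t)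
      = (1 / (q:ℂ)) * ∑ j ∈ Finset.range q,
          (a (t + j * ω) : ℂ) * Complex.exp (-Complex.I * l * t) := by
    intro t
    push_cast
    rw [mul_assoc, Finset.sum_mul]
  rw [intervalIntegral.integral_congr (fun t _ => h1 t),
    intervalIntegral.integral_const_mul,
    intervalIntegral.integral_finset_sum (μ := MeasureTheory.volume)
      (f := fun (j : ℕ) (x : ℝ) => ((a (x + j * ω) : ℝ) : ℂ) * Complex.exp (-Complex.I * l * x))
      (fun j _ => (cont_integrand ha l (j * ω)).intervalIntegrable 0 (2 * π))]
  rw [Finset.sum_congr rfl (fun j (_ : j ∈ Finset.range q) => integral_shift a ha hper (j * ω) l)]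
  rw [← Finset.sum_mul]
  ring

lemma zero_of_coeffs (K : ℝ → ℂ) (hK : Continuous K)
    (hper : Function.Periodic K (2 * π))
    (h : ∀ n : ℤ, ∫ t in (0:ℝ)..(2 * π), K t * Complex.exp (-Complex.I * n * t) = 0) :
    ∀ t, K t = 0 := by
  have hT : Fact (0 < 2 * π) := ⟨by positivity⟩
  have hFc : Continuous hper.lift := by
    apply hK.quotient_liftOn'
  set F : C(AddCircle (2 * π), ℂ) := ⟨hper.lift, hFc⟩ with hF
  have hcoeff : ∀ n : ℤ, fourierCoeff (⇑F) n = 0 := by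
    intro n
    rw [fourierCoeff_eq_intervalIntegral _ n 0]
    simp only [zero_add, hF]
    have : ∀ x : ℝ, (fourier (-n) (x : AddCircle (2*π)) : ℂ) • F (x : AddCircle (2*π))
        = K x * Complex.exp (-Complex.I * n * x) := by
      intro x
      rw [fourier_coe_apply]
      simp only [hF, ContinuousMap.coe_mk, Function.Periodic.lift_coe, smul_eq_mul]
      rw [mul_comm]
      congr 2
      push_cast
      have h2 : (2:ℂ) * π ≠ 0 := by simp [Real.pi_ne_zero]
      field_simp
    rw [intervalIntegral.integral_congr (fun x _ => this x), h n, smul_zero]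
  have hF0 : F = 0 := by
    have h0 : ContinuousMap.toLp (E := ℂ) 2 AddCircle.haarAddCircle ℂ F
        = ContinuousMap.toLp (E := ℂ) 2 AddCircle.haarAddCircle ℂ 0 := by
      have h1 : fourierBasis.repr
          (ContinuousMap.toLp (E := ℂ) 2 AddCircle.haarAddCircle ℂ F) = 0 := by
        ext i
        rw [fourierBasis_repr, fourierCoeff_toLp, hcoeff]
        rfl
      have := fourierBasis.repr.map_eq_zero_iff.mp h1
      rw [this, map_zero]
    exact ContinuousMap.toLp_injective (E := ℂ) (p := 2) (𝕜 := ℂ)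
      (AddCircle.haarAddCircle (T := 2 * π)) h0
  intro t
  have := congrArg (fun G : C(AddCircle (2*π), ℂ) => G (t : AddCircle (2*π))) hF0
  simpa [hF] using this

end Aux

theorem stmt_13 (p q : ℕ) (hco : Nat.Coprime p q) (hp : 1 ≤ p) (hq : 2 * p < q)
    (ω s c : ℝ) (hω : ω = 2 * π * p / q)
    (hs : s = Real.sin (ω / 2)) (hc : c = Real.cos (ω / 2))
    (h₁ : ℝ → ℝ) (h₁sm : ContDiff ℝ (⊤ : ℕ∞) h₁) (h₁per : ∀ t, h₁ (t + 2 * π) = h₁ t)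
    (h₁avg : ∀ t, avgOp q ω (deriv h₁) t = 0)
    (θ₁ : ℝ → ℝ) (θ₁sm : ContDiff ℝ (⊤ : ℕ∞) θ₁) (θ₁per : ∀ t, θ₁ (t + 2 * π) = θ₁ t)
    (θ₁eq : ∀ t, s * (θ₁ (t + ω) - θ₁ t)
      = (c * h₁ (t + ω) - c * h₁ t) - (s * deriv h₁ (t + ω) + s * deriv h₁ t))
    (θ₁avg : ∀ t, avgOp q ω θ₁ t = 0)
    (φ₁ : ℝ → ℝ) (φ₁sm : ContDiff ℝ (⊤ : ℕ∞) φ₁) (φ₁per : ∀ t, φ₁ (t + 2 * π) = φ₁ t)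
    (φ₁eq : ∀ t, φ₁ (t + ω) - φ₁ t = 2 * θ₁ t)
    (φ₁avg : ∀ t, avgOp q ω φ₁ t = 0)
    (ψ₁ : ℝ → ℝ) (hψ₁ : ∀ t, ψ₁ t = φ₁ t + θ₁ t)
    (h₂ : ℝ → ℝ) (h₂sm : ContDiff ℝ (⊤ : ℕ∞) h₂) (h₂per : ∀ t, h₂ (t + 2 * π) = h₂ t) :
    ((∃ θ₂ : ℝ → ℝ, ContDiff ℝ (⊤ : ℕ∞) θ₂ ∧ (∀ t, θ₂ (t + 2 * π) = θ₂ t) ∧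
        (∀ t, avgOp q ω θ₂ t = 0) ∧
        (∀ t, s * (θ₂ (t + ω) - θ₂ t)
          = (((fun u => c * h₂ u + c * deriv h₁ u * ψ₁ u - s * h₁ u * θ₁ u
                  - c * (θ₁ u) ^ 2 / 2) (t + ω))
              - ((fun u => c * h₂ u + c * deriv h₁ u * ψ₁ u - s * h₁ u * θ₁ u
                  - c * (θ₁ u) ^ 2 / 2) t))
            - (((fun u => s * deriv h₂ u + s * deriv (deriv h₁) u * ψ₁ u
                  + c * deriv h₁ u * θ₁ u) (t + ω))
              + ((fun u => s * deriv h₂ u + s * deriv (deriv h₁) u * ψ₁ u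
                  + c * deriv h₁ u * θ₁ u) t))))
      ↔ (∀ t, avgOp q ω (fun u => deriv h₂ u + θ₁ u * deriv θ₁ u) t = 0)) ∧
    ((∀ t, avgOp q ω (fun u => deriv h₂ u + θ₁ u * deriv θ₁ u) t = 0)
      ↔ (∀ l : ℤ, l ≠ 0 → (q : ℤ) ∣ l →
          fourierCoeffR (fun u => h₂ u + (θ₁ u) ^ 2 / 2) l = 0)) := by
  -- basic numeric facts
  have hq0 : q ≠ 0 := by omega
  have hqR : (q : ℝ) ≠ 0 := Nat.cast_ne_zero.mpr hq0
  have hqRpos : (0:ℝ) < (q:ℝ) := by positivity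
  have hqω : (q : ℝ) * ω = (p : ℝ) * (2 * π) := by
    rw [hω]; field_simp
  have hpRpos : (0:ℝ) < (p:ℝ) := by
    have : 0 < p := hp
    positivity
  have hωpos : 0 < ω := by
    rw [hω]; positivity
  have hωlt : ω < 2 * π := by
    rw [hω]
    rw [div_lt_iff₀ hqRpos]
    have hpq : (p:ℝ) < (q:ℝ) := by exact_mod_cast (by omega : p < q)
    nlinarith [pi_pos]
  have hs0 : s ≠ 0 := by
    rw [hs]
    have := Real.sin_pos_of_pos_of_lt_pi (x := ω / 2) (by linarith) (by linarith [pi_pos])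
    linarith
  -- smoothness and differentiability facts
  have gsm : ContDiff ℝ (⊤ : ℕ∞) (deriv h₁) := contDiff_top_deriv h₁sm
  have gdsm : ContDiff ℝ (⊤ : ℕ∞) (deriv (deriv h₁)) := contDiff_top_deriv gsm
  have h₂dsm : ContDiff ℝ (⊤ : ℕ∞) (deriv h₂) := contDiff_top_deriv h₂sm
  have θdsm : ContDiff ℝ (⊤ : ℕ∞) (deriv θ₁) := contDiff_top_deriv θ₁sm
  have ψ₁sm : ContDiff ℝ (⊤ : ℕ∞) ψ₁ := by
    rw [show ψ₁ = fun t => φ₁ t + θ₁ t from funext hψ₁]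
    exact φ₁sm.add θ₁sm
  have h₁diff : Differentiable ℝ h₁ := h₁sm.differentiable (by simp)
  have θ₁diff : Differentiable ℝ θ₁ := θ₁sm.differentiable (by simp)
  have h₂diff : Differentiable ℝ h₂ := h₂sm.differentiable (by simp)
  have gdiff : Differentiable ℝ (deriv h₁) := gsm.differentiable (by simp)
  -- periodicity of derivatives
  have gper : ∀ t, deriv h₁ (t + 2 * π) = deriv h₁ t := deriv_per h₁diff h₁per
  have gdper : ∀ t, deriv (deriv h₁) (t + 2 * π) = deriv (deriv h₁) t := deriv_per gdiff gper
  have θdper : ∀ t, deriv θ₁ (t + 2 * π) = deriv θ₁ t := deriv_per θ₁diff θ₁per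
  have h₂dper : ∀ t, deriv h₂ (t + 2 * π) = deriv h₂ t := deriv_per h₂diff h₂per
  have ψ₁per : ∀ t, ψ₁ (t + 2 * π) = ψ₁ t := by
    intro t; rw [hψ₁, hψ₁, φ₁per, θ₁per]
  -- name the two combined functions from the second-order equation
  set F : ℝ → ℝ := fun u => c * h₂ u + c * deriv h₁ u * ψ₁ u - s * h₁ u * θ₁ u
      - c * (θ₁ u) ^ 2 / 2 with hFdef
  set G : ℝ → ℝ := fun u => s * deriv h₂ u + s * deriv (deriv h₁) u * ψ₁ u
      + c * deriv h₁ u * θ₁ u with hGdef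
  set Kd : ℝ → ℝ := fun u => deriv h₂ u + θ₁ u * deriv θ₁ u with hKddef
  set K : ℝ → ℝ := fun u => h₂ u + (θ₁ u) ^ 2 / 2 with hKdef
  have Fper : ∀ t, F (t + 2 * π) = F t := by
    intro t; simp only [hFdef, h₂per, gper, ψ₁per, h₁per, θ₁per]
  have Gper : ∀ t, G (t + 2 * π) = G t := by
    intro t; simp only [hGdef, h₂dper, gdper, ψ₁per, gper, θ₁per]
  have Kdper : ∀ t, Kd (t + 2 * π) = Kd t := by
    intro t; simp only [hKddef, h₂dper, θ₁per, θdper]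
  have Kper : ∀ t, K (t + 2 * π) = K t := by
    intro t; simp only [hKdef, h₂per, θ₁per]
  have Fsm : ContDiff ℝ (⊤ : ℕ∞) F := by
    rw [hFdef]
    exact (((contDiff_const.mul h₂sm).add ((contDiff_const.mul gsm).mul ψ₁sm)).sub
      ((contDiff_const.mul h₁sm).mul θ₁sm)).sub
      ((contDiff_const.mul (θ₁sm.pow 2)).div_const 2)
  have Gsm : ContDiff ℝ (⊤ : ℕ∞) G := by
    rw [hGdef]
    exact ((contDiff_const.mul h₂dsm).add ((contDiff_const.mul gdsm).mul ψ₁sm)).add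
      ((contDiff_const.mul gsm).mul θ₁sm)
  have Ksm : ContDiff ℝ (⊤ : ℕ∞) K := by
    rw [hKdef]
    exact h₂sm.add ((θ₁sm.pow 2).div_const 2)
  -- the main trigonometric/summation identity
  have hR3 := derive_R3 ω s c h₁ θ₁ h₁sm θ₁sm θ₁eq
  have keyId := key_identity q p ω hqω s c θ₁ φ₁ ψ₁ (deriv h₁) (deriv (deriv h₁)) (deriv θ₁)
    φ₁per θdper gper gdper hR3 φ₁eq hψ₁
  have hSG : ∀ t, (∑ j ∈ Finset.range q, G (t + j * ω))
      = s * ∑ j ∈ Finset.range q, Kd (t + j * ω) := by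
    intro t
    rw [← sub_eq_zero, Finset.mul_sum, ← Finset.sum_sub_distrib]
    have h2 : ∑ j ∈ Finset.range q, (G (t + j * ω) - s * Kd (t + j * ω))
        = ∑ j ∈ Finset.range q, (s * deriv (deriv h₁) (t + j * ω) * ψ₁ (t + j * ω)
          + c * deriv h₁ (t + j * ω) * θ₁ (t + j * ω)
          - s * θ₁ (t + j * ω) * deriv θ₁ (t + j * ω)) := by
      apply Finset.sum_congr rfl
      intro j _
      simp only [hGdef, hKddef]
      ring
    rw [h2]
    exact keyId t
  have avg_iff : ∀ (a : ℝ → ℝ) (t : ℝ),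
      avgOp q ω a t = 0 ↔ ∑ j ∈ Finset.range q, a (t + j * ω) = 0 := by
    intro a t
    unfold avgOp
    constructor
    · intro h
      have := mul_eq_zero.mp h
      rcases this with h' | h'
      · exact absurd h' (by positivity)
      · exact h'
    · intro h; rw [h, mul_zero]
  -- derivative of the average of K
  have Kdiff : Differentiable ℝ K := Ksm.differentiable (by simp)
  have hKderiv : ∀ u, HasDerivAt K (Kd u) u := by
    intro u
    simp only [hKdef, hKddef]
    have h2 : HasDerivAt (fun x => (θ₁ x) ^ 2 / 2) (θ₁ u * deriv θ₁ u) u := by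
      have := ((θ₁diff u).hasDerivAt.fun_pow 2).div_const 2
      refine this.congr_deriv ?_
      push_cast
      ring
    exact (h₂diff u).hasDerivAt.add h2
  have hA2deriv : ∀ t, HasDerivAt (avgOp q ω K) (avgOp q ω Kd t) t := by
    intro t
    unfold avgOp
    apply HasDerivAt.const_mul
    apply HasDerivAt.fun_sum
    intro j _
    have h1 := hasDerivAt_shift Kdiff ((j:ℝ) * ω) t
    rwa [show deriv K = Kd from funext (fun u => (hKderiv u).deriv)] at h1
  have hKcont : Continuous K := Ksm.continuous
  constructor
  · -- Part 1
    constructor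
    · rintro ⟨θ₂, θ₂sm, θ₂per, θ₂avg, θ₂eq⟩ t
      rw [avg_iff]
      have hsum : ∑ j ∈ Finset.range q, (s * (θ₂ ((t + j * ω) + ω) - θ₂ (t + j * ω)))
          = ∑ j ∈ Finset.range q, ((F ((t + j * ω) + ω) - F (t + j * ω))
            - (G ((t + j * ω) + ω) + G (t + j * ω))) :=
        Finset.sum_congr rfl (fun j _ => θ₂eq (t + j * ω))
      have hL : ∑ j ∈ Finset.range q, (s * (θ₂ ((t + j * ω) + ω) - θ₂ (t + j * ω))) = 0 := by
        have e : ∀ j : ℕ, s * (θ₂ ((t + j * ω) + ω) - θ₂ (t + j * ω))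
            = (fun x => s * θ₂ x) ((t + j * ω) + ω) - (fun x => s * θ₂ x) (t + j * ω) := by
          intro j; simp only; ring
        rw [Finset.sum_congr rfl (fun j _ => e j)]
        exact orb_delta q p ω hqω (fun x => s * θ₂ x) (fun x => by simp only [θ₂per]) t
      have hR : ∑ j ∈ Finset.range q, ((F ((t + j * ω) + ω) - F (t + j * ω))
            - (G ((t + j * ω) + ω) + G (t + j * ω)))
          = -2 * ∑ j ∈ Finset.range q, G (t + j * ω) := by
        rw [Finset.sum_sub_distrib, orb_delta q p ω hqω F Fper t,
          orb_sigma q p ω hqω G Gper t]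
        ring
      have hG0 : ∑ j ∈ Finset.range q, G (t + j * ω) = 0 := by
        rw [hR] at hsum
        rw [hL] at hsum
        linarith [hsum]
      have h5 := hSG t
      rw [hG0] at h5
      rcases mul_eq_zero.mp h5.symm with h' | h'
      · exact absurd h' hs0
      · exact h'
    · intro havg
      have hKd0 : ∀ t, ∑ j ∈ Finset.range q, Kd (t + j * ω) = 0 :=
        fun t => (avg_iff Kd t).mp (havg t)
      have hSGzero : ∀ t, ∑ j ∈ Finset.range q, G (t + j * ω) = 0 := by
        intro t; rw [hSG t, hKd0 t, mul_zero]
      set b : ℝ → ℝ := fun x => (1 / s) * ((F (x + ω) - F x) - (G (x + ω) + G x)) with hbdef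
      have bper : ∀ x, b (x + 2 * π) = b x := by
        intro x
        simp only [hbdef]
        rw [show x + 2 * π + ω = (x + ω) + 2 * π by ring]
        rw [Fper (x + ω), Gper (x + ω), Fper x, Gper x]
      have hSb : ∀ t, ∑ j ∈ Finset.range q, b (t + j * ω) = 0 := by
        intro t
        have h1 : ∑ j ∈ Finset.range q, b (t + j * ω)
            = (1 / s) * ∑ j ∈ Finset.range q, ((F ((t + j * ω) + ω) - F (t + j * ω))
              - (G ((t + j * ω) + ω) + G (t + j * ω))) := by
          rw [Finset.mul_sum]
        rw [h1, Finset.sum_sub_distrib, orb_delta q p ω hqω F Fper t,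
          orb_sigma q p ω hqω G Gper t, hSGzero t]
        ring
      have shift_sm : ∀ (f : ℝ → ℝ) (α : ℝ), ContDiff ℝ (⊤ : ℕ∞) f → ContDiff ℝ (⊤ : ℕ∞) (fun x => f (x + α)) :=
        fun f α hf => hf.comp (contDiff_id.add contDiff_const)
      have bsm : ContDiff ℝ (⊤ : ℕ∞) b := by
        rw [hbdef]
        exact contDiff_const.mul (((shift_sm F ω Fsm).sub Fsm).sub ((shift_sm G ω Gsm).add Gsm))
      set w : ℝ → ℝ := fun x => ∑ j ∈ Finset.range q, (j:ℝ) * b (x + j * ω) with hwdef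
      have hw : ∀ t, w (t + ω) - w t = q * b t := by
        intro t
        exact step_solve q p ω hqω b bper hSb t
      have wper : ∀ x, w (x + 2 * π) = w x := by
        intro x
        simp only [hwdef]
        apply Finset.sum_congr rfl
        intro j _
        rw [show x + 2 * π + (j:ℝ) * ω = (x + j * ω) + 2 * π by ring, bper]
      have wsm : ContDiff ℝ (⊤ : ℕ∞) w := by
        rw [hwdef]
        apply ContDiff.sum
        intro j _
        exact contDiff_const.mul (shift_sm b ((j:ℝ) * ω) bsm)
      set v : ℝ → ℝ := fun x => w x / q with hvdef
      have vper : ∀ x, v (x + 2 * π) = v x := by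
        intro x; simp only [hvdef, wper]
      have vsm : ContDiff ℝ (⊤ : ℕ∞) v := wsm.div_const q
      have vd : ∀ t, v (t + ω) - v t = b t := by
        intro t
        simp only [hvdef]
        rw [div_sub_div_same, hw t]
        field_simp
      set A : ℝ → ℝ := avgOp q ω v with hAdef
      have Asm : ContDiff ℝ (⊤ : ℕ∞) A := by
        rw [hAdef]; unfold avgOp
        exact contDiff_const.mul (ContDiff.sum (fun j _ => shift_sm v ((j:ℝ) * ω) vsm))
      have hAshift : ∀ t, A (t + ω) = A t := by
        intro t
        simp only [hAdef]; unfold avgOp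
        congr 1
        exact orb_shift q p ω hqω v vper t
      have Aper : ∀ x, A (x + 2 * π) = A x := by
        intro x
        simp only [hAdef]; unfold avgOp
        congr 1
        apply Finset.sum_congr rfl
        intro j _
        rw [show x + 2 * π + (j:ℝ) * ω = (x + j * ω) + 2 * π by ring, vper]
      have hAorbit : ∀ (j : ℕ) (t : ℝ), A (t + j * ω) = A t := by
        intro j
        induction j with
        | zero => intro t; norm_num
        | succ k ih =>
            intro t
            rw [show t + ((k+1 : ℕ) : ℝ) * ω = (t + k * ω) + ω by push_cast; ring,
              hAshift (t + k * ω), ih t]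
      refine ⟨fun x => v x - A x, vsm.sub Asm, ?_, ?_, ?_⟩
      · intro t; simp only [vper, Aper]
      · intro t
        rw [avg_iff]
        rw [Finset.sum_sub_distrib]
        have h1 : ∑ j ∈ Finset.range q, A (t + j * ω) = q * A t := by
          rw [Finset.sum_congr rfl (fun j _ => hAorbit j t)]
          rw [Finset.sum_const, Finset.card_range, nsmul_eq_mul]
        have h2 : ∑ j ∈ Finset.range q, v (t + j * ω) = q * A t := by
          have : A t = (1 / (q:ℝ)) * ∑ j ∈ Finset.range q, v (t + j * ω) := by
            rw [hAdef]; rfl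
          rw [this]
          field_simp
          simp only [mul_comm ω]
        rw [h1, h2, sub_self]
      · intro t
        show s * ((v (t + ω) - A (t + ω)) - (v t - A t)) = (F (t + ω) - F t) - (G (t + ω) + G t)
        rw [hAshift t]
        have e1 : v (t + ω) - A t - (v t - A t) = b t := by
          have := vd t; linarith
        rw [e1]
        simp only [hbdef]
        field_simp
  · -- Part 2
    constructor
    · intro hz l hl0 hdvd
      have hdiffA : Differentiable ℝ (avgOp q ω K) := fun t => (hA2deriv t).differentiableAt
      have hderiv0 : ∀ x, deriv (avgOp q ω K) x = 0 := by
        intro x; rw [(hA2deriv x).deriv]; exact hz x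
      have hconst : ∀ t, avgOp q ω K t = avgOp q ω K 0 :=
        fun t => is_const_of_deriv_eq_zero hdiffA hderiv0 t 0
      have h1 := coeffR_avg q ω K hKcont Kper l
      rw [Finset.sum_congr rfl (fun j (_ : j ∈ Finset.range q) =>
        exp_orbit_one p q hq0 l hdvd ω hω j)] at h1
      simp only [Finset.sum_const, Finset.card_range, nsmul_eq_mul, mul_one] at h1
      have hqC : (q:ℂ) ≠ 0 := Nat.cast_ne_zero.mpr hq0
      rw [show (1/(q:ℂ)) * (q:ℂ) = 1 by field_simp, one_mul] at h1
      have h2 : fourierCoeffR (avgOp q ω K) l = 0 := by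
        rw [show avgOp q ω K = fun _ => avgOp q ω K 0 from funext hconst]
        exact coeffR_const _ l hl0
      rw [h2] at h1
      exact h1.symm
    · intro hcf t
      set c₀ : ℂ := fourierCoeffR (avgOp q ω K) 0 with hc₀
      have hAcont : Continuous (avgOp q ω K) := by
        unfold avgOp
        exact continuous_const.mul (continuous_finset_sum _ (fun j _ =>
          hKcont.comp (continuous_id.add continuous_const)))
      have hAper : ∀ x, avgOp q ω K (x + 2 * π) = avgOp q ω K x := by
        intro x
        unfold avgOp
        congr 1
        apply Finset.sum_congr rfl
        intro j _
        rw [show x + 2 * π + (j:ℝ) * ω = (x + j * ω) + 2 * π by ring, Kper]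
      have h2pi : (2 * (π:ℂ)) ≠ 0 := by simp [Real.pi_ne_zero]
      have hint : ∀ n : ℤ, (∫ u in (0:ℝ)..(2 * π), ((avgOp q ω K u : ℝ) : ℂ)
          * Complex.exp (-Complex.I * n * u)) = 2 * π * fourierCoeffR (avgOp q ω K) n := by
        intro n
        unfold fourierCoeffR
        field_simp
      have hintexp : ∀ n : ℤ, IntervalIntegrable
          (fun u : ℝ => Complex.exp (-Complex.I * n * u)) MeasureTheory.volume 0 (2 * π) :=
        fun n => (Complex.continuous_exp.comp
          (continuous_const.mul Complex.continuous_ofReal)).intervalIntegrable 0 (2 * π)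
      have hintA : ∀ n : ℤ, IntervalIntegrable
          (fun u : ℝ => ((avgOp q ω K u : ℝ) : ℂ) * Complex.exp (-Complex.I * n * u))
          MeasureTheory.volume 0 (2 * π) := by
        intro n
        exact ((Complex.continuous_ofReal.comp hAcont).mul (Complex.continuous_exp.comp
          (continuous_const.mul Complex.continuous_ofReal))).intervalIntegrable 0 (2 * π)
      have hsplit : ∀ n : ℤ, (∫ u in (0:ℝ)..(2 * π), (((avgOp q ω K u : ℝ) : ℂ) - c₀)
            * Complex.exp (-Complex.I * n * u))
          = (∫ u in (0:ℝ)..(2 * π), ((avgOp q ω K u : ℝ) : ℂ)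
              * Complex.exp (-Complex.I * n * u))
            - c₀ * ∫ u in (0:ℝ)..(2 * π), Complex.exp (-Complex.I * n * u) := by
        intro n
        rw [← intervalIntegral.integral_const_mul, ← intervalIntegral.integral_sub (hintA n)
          ((hintexp n).const_mul c₀)]
        apply intervalIntegral.integral_congr
        intro u _
        simp only
        ring
      have hKC : ∀ u, ((avgOp q ω K u : ℝ) : ℂ) - c₀ = 0 := by
        apply zero_of_coeffs
        · exact (Complex.continuous_ofReal.comp hAcont).sub continuous_const
        · intro x
          simp only [hAper x]
        · intro n
          by_cases hn : n = 0
          · subst hn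
            rw [hsplit 0, hint 0, ← hc₀]
            have he : (∫ u in (0:ℝ)..(2 * π), Complex.exp (-Complex.I * (0:ℤ) * u))
                = 2 * π := by
              have : ∀ u : ℝ, Complex.exp (-Complex.I * (0:ℤ) * u) = 1 := by
                intro u; norm_num
              rw [intervalIntegral.integral_congr (fun u _ => this u)]
              simp
            rw [he]
            ring
          · rw [hsplit n, hint n, integral_exp_zero n hn, mul_zero, sub_zero]
            have h3 := coeffR_avg q ω K hKcont Kper n
            by_cases hdn : (q:ℤ) ∣ n
            · rw [Finset.sum_congr rfl (fun j (_ : j ∈ Finset.range q) =>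
                exp_orbit_one p q hq0 n hdn ω hω j)] at h3
              simp only [Finset.sum_const, Finset.card_range, nsmul_eq_mul, mul_one] at h3
              have hqC : (q:ℂ) ≠ 0 := Nat.cast_ne_zero.mpr hq0
              rw [show (1/(q:ℂ)) * (q:ℂ) = 1 by field_simp, one_mul] at h3
              rw [h3, hcf n hn hdn, mul_zero]
            · rw [exp_orbit_sum_zero p q hco hq0 n hdn ω hω] at h3
              rw [h3]
              ring
      have hconstR : ∀ u, avgOp q ω K u = avgOp q ω K 0 := by
        intro u
        have h1' := hKC u
        have h2' := hKC 0
        rw [sub_eq_zero] at h1' h2'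
        have : ((avgOp q ω K u : ℝ) : ℂ) = ((avgOp q ω K 0 : ℝ) : ℂ) := by rw [h1', h2']
        exact_mod_cast this
      have h4 := hA2deriv t
      rw [show avgOp q ω K = fun _ => avgOp q ω K 0 from funext hconstR] at h4
      exact h4.unique (hasDerivAt_const t _)
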